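/- arXiv:2105.07741 — 4 statements merged into one kernel-verified Lean document; each statement's English description precedes it below -/
import Mathlib

section
/- Let f : ℝ → ℝ be bounded, continuous, piecewise continuously differentiable with finitely many non-differentiable points, and with bounded derivative. Then ∫ z·f(z) dγ(z) = ∫ f'(z) dγ(z), where γ is the standard Gaussian measure. -/
/-!
Write `φ` for the Gaussian density, so that `φ' = -((x - μ) / v) φ` and, off the exceptional set,
`(φ f)' = φ (f' - (x - μ) f / v)`. Because `φ f` is continuous, the fundamental theorem of calculus
still applies across the countably many points where `f` is not differentiable, and `φ f` vanishes
at `±∞` since `f` is bounded. Hence `(φ f)'` integrates to zero over `ℝ`, which is the claim once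
both integrals are read against the density `φ`.
-/

open MeasureTheory ProbabilityTheory Real Set Filter Topology
open scoped NNReal

theorem integral_eq_sub_of_hasDerivAt_off_countable_of_tendsto {E : Type*} [NormedAddCommGroup E]
    [NormedSpace ℝ E] [CompleteSpace E] {g g' : ℝ → E} {s : Set ℝ} {m n : E}
    (hs : s.Countable) (hg : Continuous g) (hderiv : ∀ x ∉ s, HasDerivAt g (g' x) x)
    (hg' : Integrable g') (hbot : Tendsto g atBot (𝓝 m)) (htop : Tendsto g atTop (𝓝 n)) :
    ∫ x, g' x = n - m := by
  have hftc : ∀ R, ∫ x in -R..R, g' x = g R - g (-R) := fun R ↦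
    integral_eq_of_hasDerivAt_off_countable g g' hs hg.continuousOn
      (fun x hx ↦ hderiv x hx.2) hg'.intervalIntegrable
  refine tendsto_nhds_unique (intervalIntegral_tendsto_integral hg' tendsto_neg_atTop_atBot
    tendsto_id) ?_
  exact (htop.sub (hbot.comp tendsto_neg_atTop_atBot)).congr fun R ↦ (hftc R).symm

theorem aestronglyMeasurable_of_hasDerivAt_off_countable {f f' : ℝ → ℝ} {s : Set ℝ}
    (hs : s.Countable) (hderiv : ∀ x ∉ s, HasDerivAt f (f' x) x) (ν : Measure ℝ)
    [NullSingletonClass ν] : AEStronglyMeasurable f' ν :=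
  (measurable_deriv f).aestronglyMeasurable.congr <| by
    filter_upwards [hs.ae_notMem ν] with x hx using (hderiv x hx).deriv

theorem hasDerivAt_gaussianPDFReal (μ : ℝ) (v : ℝ≥0) (x : ℝ) :
    HasDerivAt (gaussianPDFReal μ v) (-((x - μ) / v) * gaussianPDFReal μ v x) x := by
  rcases eq_or_ne v 0 with rfl | hv
  · simp
  have hexponent : HasDerivAt (fun y ↦ -(y - μ) ^ 2 / (2 * v)) (-((x - μ) / v)) x :=
    (((hasDerivAt_id' x).sub_const μ).fun_pow 2).fun_neg.div_const (2 * (v : ℝ)) |>.congr_deriv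
      (by field_simp; ring)
  rw [gaussianPDFReal_def]
  exact (hexponent.exp.const_mul _).congr_deriv (by ring)

theorem tendsto_gaussianPDFReal_cocompact (μ : ℝ) (v : ℝ≥0) :
    Tendsto (gaussianPDFReal μ v) (cocompact ℝ) (𝓝 0) := by
  rcases eq_or_ne v 0 with rfl | hv
  · rw [gaussianPDFReal_zero_var]
    exact tendsto_const_nhds
  have hdist : Tendsto (fun x : ℝ ↦ ‖x - μ‖) (cocompact ℝ) atTop :=
    tendsto_norm_cocompact_atTop.comp (Homeomorph.subRight μ).map_cocompact.le
  have hexponent : Tendsto (fun x ↦ -(x - μ) ^ 2 / (2 * v)) (cocompact ℝ) atBot := by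
    have hv' : (0 : ℝ) < 2 * v := by positivity
    refine (tendsto_neg_atTop_atBot.comp ((tendsto_pow_atTop two_ne_zero).comp hdist))
      |>.atBot_div_const hv' |>.congr fun x ↦ ?_
    simp [sq_abs]
  simpa [gaussianPDFReal_def] using
    (tendsto_exp_atBot.comp hexponent).const_mul (√(2 * π * v))⁻¹

theorem integrable_gaussianPDFReal_smul_iff {E : Type*} [NormedAddCommGroup E] [NormedSpace ℝ E]
    {μ : ℝ} {v : ℝ≥0} (hv : v ≠ 0) {h : ℝ → E} :
    Integrable (fun x ↦ gaussianPDFReal μ v x • h x) ↔ Integrable h (gaussianReal μ v) := by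
  rw [gaussianReal_of_var_ne_zero _ hv, integrable_withDensity_iff_integrable_smul'
    (measurable_gaussianPDF μ v) (ae_of_all _ fun _ ↦ gaussianPDF_lt_top)]
  simp only [toReal_gaussianPDF]

theorem integrable_sub_mul_gaussianReal {f : ℝ → ℝ} {C : ℝ} (hf : Continuous f)
    (hbdd : ∀ x, |f x| ≤ C) (μ : ℝ) (v : ℝ≥0) :
    Integrable (fun x ↦ (x - μ) * f x) (gaussianReal μ v) :=
  (((memLp_id_gaussianReal 1).integrable le_rfl).sub (integrable_const μ)).mul_bdd
    hf.aestronglyMeasurable (ae_of_all _ hbdd)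

theorem integral_sub_mul_gaussianReal_eq_integral_deriv {f f' : ℝ → ℝ} {s : Set ℝ} {C : ℝ}
    (μ : ℝ) (v : ℝ≥0) (hs : s.Countable) (hf : Continuous f) (hbdd : ∀ x, |f x| ≤ C)
    (hderiv : ∀ x ∉ s, HasDerivAt f (f' x) x) (hf' : Integrable f' (gaussianReal μ v)) :
    ∫ x, (x - μ) * f x ∂gaussianReal μ v = v * ∫ x, f' x ∂gaussianReal μ v := by
  rcases eq_or_ne v 0 with rfl | hv
  · simp [gaussianReal_zero_var]
  set φ := gaussianPDFReal μ v
  have hφ : Continuous φ :=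
    continuous_iff_continuousAt.2 fun x ↦ (hasDerivAt_gaussianPDFReal μ v x).continuousAt
  have hI := integrable_sub_mul_gaussianReal hf hbdd μ v
  set h : ℝ → ℝ := fun x ↦ f' x - (x - μ) * f x / v
  have hh : Integrable h (gaussianReal μ v) := hf'.sub (hI.div_const _)
  have hderiv_mul : ∀ x ∉ s, HasDerivAt (fun x ↦ φ x * f x) (φ x * h x) x := fun x hx ↦
    ((hasDerivAt_gaussianPDFReal μ v x).mul (hderiv x hx)).congr_deriv (by ring)
  have hdecay : Tendsto (fun x ↦ φ x * f x) (cocompact ℝ) (𝓝 0) := by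
    refine squeeze_zero_norm (fun x ↦ ?_)
      (by simpa using (tendsto_gaussianPDFReal_cocompact μ v).const_mul C)
    rw [norm_mul, Real.norm_of_nonneg (gaussianPDFReal_nonneg μ v x), mul_comm]
    exact mul_le_mul_of_nonneg_right (hbdd x) (gaussianPDFReal_nonneg μ v x)
  have hzero : ∫ x, h x ∂gaussianReal μ v = 0 := by
    rw [integral_gaussianReal_eq_integral_smul hv]
    exact (integral_eq_sub_of_hasDerivAt_off_countable_of_tendsto hs (hφ.mul hf) hderiv_mul
      ((integrable_gaussianPDFReal_smul_iff hv).2 hh) (hdecay.mono_left atBot_le_cocompact)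
      (hdecay.mono_left atTop_le_cocompact)).trans (sub_self 0)
  rw [integral_sub hf' (hI.div_const _), integral_div, sub_eq_zero] at hzero
  rw [hzero]
  field_simp

theorem gaussian_integration_by_parts_continuous_general
    (f f' : ℝ → ℝ) (s : Finset ℝ) (C C' : ℝ)
    (hcont : Continuous f)
    (hbdd : ∀ z, |f z| ≤ C)
    (hderiv : ∀ z ∉ s, HasDerivAt f (f' z) z)
    (hderiv_bdd : ∀ z, |f' z| ≤ C') :
    ∫ z, z * f z ∂(gaussianReal 0 1) = ∫ z, f' z ∂(gaussianReal 0 1) := by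
  have := nullSingletonClass_gaussianReal (μ := 0) one_ne_zero
  have hf' : Integrable f' (gaussianReal 0 1) :=
    .of_bound (aestronglyMeasurable_of_hasDerivAt_off_countable s.countable_toSet hderiv _) C'
      (ae_of_all _ hderiv_bdd)
  simpa using integral_sub_mul_gaussianReal_eq_integral_deriv 0 1 s.countable_toSet hcont hbdd
    hderiv hf'

theorem gaussian_integration_by_parts_continuous
    (f f' : ℝ → ℝ) (s : Finset ℝ) (C C' : ℝ)
    (hcont : Continuous f)
    (hbdd : ∀ z, |f z| ≤ C)
    (hderiv : ∀ z ∉ s, HasDerivAt f (f' z) z)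
    (hmeas : Measurable f')
    (hderiv_bdd : ∀ z, |f' z| ≤ C') :
    ∫ z, z * f z ∂(gaussianReal 0 1) = ∫ z, f' z ∂(gaussianReal 0 1) :=
  gaussian_integration_by_parts_continuous_general f f' s C C' hcont hbdd hderiv hderiv_bdd
end

section
/- Let f : ℝ → ℝ be bounded and piecewise continuously differentiable with non-differentiable points t₁ < ... < t_T and bounded derivative. Then ∫ z·f(z) dγ(z) = Σᵢ [ −exp(−z²/2)/√(2π) · f(z) ] evaluated from tᵢ⁺ to tᵢ⁻ plus ∫ f'(z) dγ(z). -/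
open MeasureTheory ProbabilityTheory Filter

/-!
With `φ` the normal density, `φ' = -((z - μ) / v) φ`, so off the jump points
`(-v φ f)' = (z - μ) φ f - v φ f'`. Integrating this over `ℝ` piece by piece between consecutive
jump points, the fundamental theorem of calculus leaves the one-sided values of `-v φ f` at each
jump; the boundary terms at `±∞` vanish because `f` is bounded and `φ` decays.
-/

open Set Topology
open scoped NNReal

theorem measurable_of_continuousOn_compl_countable {α β : Type*} [TopologicalSpace α]
    [MeasurableSpace α] [OpensMeasurableSpace α] [MeasurableSingletonClass α]
    [TopologicalSpace β] [MeasurableSpace β] [BorelSpace β] {f : α → β} (s : Set α)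
    (hs : s.Countable) (hf : ContinuousOn f sᶜ) : Measurable f :=
  measurable_of_measurable_on_compl_countable s hs
    (continuousOn_iff_continuous_domRestrict.1 hf).measurable

section JumpFTC

variable {E : Type*} [NormedAddCommGroup E] [NormedSpace ℝ E] [CompleteSpace E]
  {G g Gl Gr : ℝ → E} (s : Finset ℝ)

theorem intervalIntegral.integral_eq_sub_add_sum_jumps {a b : ℝ} {Ga Gb : E} (hab : a < b)
    (hs : ∀ t ∈ s, t ∈ Ioo a b) (hderiv : ∀ x ∈ Ioo a b, x ∉ s → HasDerivAt G (g x) x)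
    (hint : IntervalIntegrable g volume a b)
    (hl : ∀ t ∈ s, Tendsto G (𝓝[<] t) (𝓝 (Gl t))) (hr : ∀ t ∈ s, Tendsto G (𝓝[>] t) (𝓝 (Gr t)))
    (ha : Tendsto G (𝓝[>] a) (𝓝 Ga)) (hb : Tendsto G (𝓝[<] b) (𝓝 Gb)) :
    ∫ x in a..b, g x = Gb - Ga + ∑ t ∈ s, (Gl t - Gr t) := by
  induction s using Finset.induction_on_max generalizing b Gb with
  | empty =>
    simpa using integral_eq_sub_of_hasDerivAt_of_tendsto hab
      (fun x hx => hderiv x hx (Finset.notMem_empty x)) hint ha hb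
  | insert t s' hlt ih =>
    have ht : t ∈ Ioo a b := hs t (Finset.mem_insert_self t s')
    have hat := hint.mono_set (uIcc_subset_uIcc_left (Icc_subset_uIcc (Ioo_subset_Icc_self ht)))
    have htb := hint.mono_set (uIcc_subset_uIcc_right (Icc_subset_uIcc (Ioo_subset_Icc_self ht)))
    have hleft : ∫ x in a..t, g x = Gl t - Ga + ∑ u ∈ s', (Gl u - Gr u) := by
      refine ih ht.1 (fun u hu => ⟨(hs u (Finset.mem_insert_of_mem hu)).1, hlt u hu⟩)
        (fun x hx hxs => hderiv x ⟨hx.1, hx.2.trans ht.2⟩ ?_)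
        hat (fun u hu => hl u (Finset.mem_insert_of_mem hu))
        (fun u hu => hr u (Finset.mem_insert_of_mem hu)) (hl t (Finset.mem_insert_self t s'))
      simp only [Finset.mem_insert, not_or]
      exact ⟨hx.2.ne, hxs⟩
    have hright : ∫ x in t..b, g x = Gb - Gr t := by
      refine integral_eq_sub_of_hasDerivAt_of_tendsto ht.2
        (fun x hx => hderiv x ⟨ht.1.trans hx.1, hx.2⟩ ?_)
        htb (hr t (Finset.mem_insert_self t s')) hb
      simp only [Finset.mem_insert, not_or]
      exact ⟨hx.1.ne', fun h => (hlt x h).asymm hx.1⟩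
    rw [← integral_add_adjacent_intervals hat htb, hleft, hright,
      Finset.sum_insert fun h => (hlt t h).false]
    abel

theorem integral_eq_sub_add_sum_jumps {m n : E} (hderiv : ∀ x ∉ s, HasDerivAt G (g x) x)
    (hint : Integrable g)
    (hl : ∀ t ∈ s, Tendsto G (𝓝[<] t) (𝓝 (Gl t))) (hr : ∀ t ∈ s, Tendsto G (𝓝[>] t) (𝓝 (Gr t)))
    (hbot : Tendsto G atBot (𝓝 m)) (htop : Tendsto G atTop (𝓝 n)) :
    ∫ x, g x = n - m + ∑ t ∈ s, (Gl t - Gr t) := by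
  refine tendsto_nhds_unique (intervalIntegral_tendsto_integral hint tendsto_neg_atTop_atBot
    tendsto_id) (((htop.sub (hbot.comp tendsto_neg_atTop_atBot)).add_const _).congr' ?_)
  have hs : ∀ᶠ R in atTop, ∀ t ∈ s, t ∈ Ioo (-R) R :=
    s.eventually_all.2 fun t _ => (eventually_gt_atTop |t|).mono fun R hR => abs_lt.1 hR
  filter_upwards [hs, eventually_gt_atTop 0] with R hR hR0
  have hcont : ∀ x ∉ s, ∀ S : Set ℝ, Tendsto G (𝓝[S] x) (𝓝 (G x)) := fun x hx _ =>
    (hderiv x hx).continuousAt.continuousWithinAt.tendsto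
  exact (intervalIntegral.integral_eq_sub_add_sum_jumps s (neg_lt_self hR0) hR
    (fun x _ hxs => hderiv x hxs) hint.intervalIntegrable hl hr
    (hcont _ (fun h => (hR _ h).1.false) _) (hcont _ (fun h => (hR _ h).2.false) _)).symm

end JumpFTC

namespace ProbabilityTheory

variable {μ : ℝ} {v : ℝ≥0}

lemma hasDerivAt_gaussianPDFReal (x : ℝ) :
    HasDerivAt (gaussianPDFReal μ v) (-((x - μ) / v) * gaussianPDFReal μ v x) x := by
  have h : HasDerivAt (fun y => -(y - μ) ^ 2 / (2 * v)) (-((x - μ) / v)) x :=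
    (((hasDerivAt_id' x).sub_const μ).fun_pow 2).fun_neg.div_const (2 * (v : ℝ))
      |>.congr_deriv (by ring)
  rw [gaussianPDFReal_def]
  exact (h.exp.const_mul (√(2 * Real.pi * v))⁻¹).congr_deriv (by ring)

lemma tendsto_gaussianPDFReal_of_tendsto_abs {l : Filter ℝ} (hv : v ≠ 0)
    (h : Tendsto (fun x => |x - μ|) l atTop) : Tendsto (gaussianPDFReal μ v) l (𝓝 0) := by
  have hsq : Tendsto (fun x => -(x - μ) ^ 2 / (2 * v)) l atBot := by
    refine (tendsto_neg_atTop_atBot.comp ?_).atBot_div_const (by positivity)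
    simpa only [Function.comp_def, sq_abs] using (tendsto_pow_atTop two_ne_zero).comp h
  simpa only [gaussianPDFReal_def, Function.comp_def, mul_zero] using
    (Real.tendsto_exp_atBot.comp hsq).const_mul (√(2 * Real.pi * v))⁻¹

lemma tendsto_gaussianPDFReal_atBot (hv : v ≠ 0) :
    Tendsto (gaussianPDFReal μ v) atBot (𝓝 0) :=
  tendsto_gaussianPDFReal_of_tendsto_abs hv
    (tendsto_abs_atBot_atTop.comp (tendsto_atBot_add_const_right _ (-μ) tendsto_id))

lemma tendsto_gaussianPDFReal_atTop (hv : v ≠ 0) :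
    Tendsto (gaussianPDFReal μ v) atTop (𝓝 0) :=
  tendsto_gaussianPDFReal_of_tendsto_abs hv
    (tendsto_abs_atTop_atTop.comp (tendsto_atTop_add_const_right _ (-μ) tendsto_id))

lemma integrable_gaussianPDFReal_smul_iff {E : Type*} [NormedAddCommGroup E] [NormedSpace ℝ E]
    (hv : v ≠ 0) {h : ℝ → E} :
    Integrable (fun x => gaussianPDFReal μ v x • h x) ↔ Integrable h (gaussianReal μ v) := by
  rw [gaussianReal_of_var_ne_zero _ hv, integrable_withDensity_iff_integrable_smul'
    (measurable_gaussianPDF _ _) (ae_of_all _ fun _ => gaussianPDF_lt_top)]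
  simp only [toReal_gaussianPDF]

lemma gaussianPDFReal_zero_one (x : ℝ) :
    gaussianPDFReal 0 1 x = Real.exp (-x ^ 2 / 2) / √(2 * Real.pi) := by
  simp [gaussianPDFReal, div_eq_inv_mul]

theorem integral_sub_mul_gaussianReal_eq_sum_jumps_add {f f' fl fr : ℝ → ℝ} {C C' : ℝ}
    (s : Finset ℝ) (hv : v ≠ 0) (hbdd : ∀ z, |f z| ≤ C)
    (hderiv : ∀ z ∉ s, HasDerivAt f (f' z) z) (hmeas : Measurable f')
    (hderiv_bdd : ∀ z, |f' z| ≤ C')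
    (hleft : ∀ t ∈ s, Tendsto f (𝓝[<] t) (𝓝 (fl t)))
    (hright : ∀ t ∈ s, Tendsto f (𝓝[>] t) (𝓝 (fr t))) :
    ∫ z, (z - μ) * f z ∂gaussianReal μ v =
      v * (∑ t ∈ s, gaussianPDFReal μ v t * (fr t - fl t) + ∫ z, f' z ∂gaussianReal μ v) := by
  set φ := gaussianPDFReal μ v
  have hf : Measurable f := measurable_of_continuousOn_compl_countable s s.countable_toSet
    fun z hz => (hderiv z hz).continuousAt.continuousWithinAt
  have hint₁ : Integrable (fun z => φ z * ((z - μ) * f z)) :=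
    (integrable_gaussianPDFReal_smul_iff hv).2 <|
      (((memLp_id_gaussianReal 1).integrable le_rfl).sub (integrable_const μ)).mul_bdd
        hf.aestronglyMeasurable (ae_of_all _ hbdd)
  have hint₂ : Integrable (fun z => φ z * f' z) :=
    (integrable_gaussianPDFReal_smul_iff hv).2
      (.of_bound hmeas.aestronglyMeasurable C' (ae_of_all _ hderiv_bdd))
  have hv' : (v : ℝ) ≠ 0 := mod_cast hv
  have hφ : Continuous φ := continuous_iff_continuousAt.2 fun z =>
    (hasDerivAt_gaussianPDFReal z).continuousAt
  have hGd : ∀ z ∉ s, HasDerivAt (fun z => -(v * (φ z * f z)))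
      (φ z * ((z - μ) * f z) - v * (φ z * f' z)) z := fun z hz =>
    (((hasDerivAt_gaussianPDFReal z).mul (hderiv z hz)).const_mul (v : ℝ)).neg.congr_deriv
      (by field_simp; ring)
  have hjump : ∀ t {l c}, l ≤ 𝓝 t → Tendsto f l (𝓝 c) →
      Tendsto (fun z => -(v * (φ z * f z))) l (𝓝 (-(v * (φ t * c)))) := fun t l c hl hfc =>
    ((((hφ.tendsto t).mono_left hl).mul hfc).const_mul _).neg
  have htail : ∀ {l : Filter ℝ}, Tendsto φ l (𝓝 0) →
      Tendsto (fun z => -(v * (φ z * f z))) l (𝓝 0) := fun hl => by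
    simpa using ((hl.zero_mul_isBoundedUnder_le
      (isBoundedUnder_of ⟨C, fun z => hbdd z⟩)).const_mul (v : ℝ)).neg
  have key := integral_eq_sub_add_sum_jumps s hGd (hint₁.sub (hint₂.const_mul v))
    (fun t ht => hjump t nhdsWithin_le_nhds (hleft t ht))
    (fun t ht => hjump t nhdsWithin_le_nhds (hright t ht))
    (htail (tendsto_gaussianPDFReal_atBot hv)) (htail (tendsto_gaussianPDFReal_atTop hv))
  have hsum : ∑ t ∈ s, (-(v * (φ t * fl t)) - -(v * (φ t * fr t))) =
      v * ∑ t ∈ s, φ t * (fr t - fl t) := by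
    rw [Finset.mul_sum]
    exact Finset.sum_congr rfl fun t _ => by ring
  rw [integral_sub hint₁ (hint₂.const_mul _), integral_const_mul, hsum, sub_zero] at key
  simp only [integral_gaussianReal_eq_integral_smul hv, smul_eq_mul]
  linear_combination key

end ProbabilityTheory

theorem gaussian_integration_by_parts_piecewise
    (f f' : ℝ → ℝ) (s : Finset ℝ) (fl fr : ℝ → ℝ) (C C' : ℝ)
    (hbdd : ∀ z, |f z| ≤ C)
    (hderiv : ∀ z ∉ s, HasDerivAt f (f' z) z)
    (hmeas : Measurable f')
    (hderiv_bdd : ∀ z, |f' z| ≤ C')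
    (hleft : ∀ t ∈ s, Tendsto f (nhdsWithin t (Set.Iio t)) (nhds (fl t)))
    (hright : ∀ t ∈ s, Tendsto f (nhdsWithin t (Set.Ioi t)) (nhds (fr t))) :
    ∫ z, z * f z ∂(gaussianReal 0 1) =
      (∑ t ∈ s, ((-(Real.exp (-t ^ 2 / 2) / Real.sqrt (2 * Real.pi))) * fl t -
          (-(Real.exp (-t ^ 2 / 2) / Real.sqrt (2 * Real.pi))) * fr t)) +
      ∫ z, f' z ∂(gaussianReal 0 1) := by
  have h := integral_sub_mul_gaussianReal_eq_sum_jumps_add (μ := 0) s one_ne_zero hbdd hderiv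
    hmeas hderiv_bdd hleft hright
  simp only [sub_zero, NNReal.coe_one, one_mul, gaussianPDFReal_zero_one] at h
  rw [h]
  congr 1
  exact Finset.sum_congr rfl fun t _ => by ring
end

section
/- With W as above, W is continuous on ℝ_{≥0}, satisfies σ_b² ≤ W(q) < a²/erf(a/√(2q)) + σ_b², and there exists q* > 0 with W(q*) = q*. -/
open MeasureTheory ProbabilityTheory

noncomputable def erf (x : ℝ) : ℝ :=
  (2 / Real.sqrt Real.pi) * ∫ t in (0:ℝ)..x, Real.exp (-t ^ 2)

noncomputable def Wmap (φ φ' : ℝ → ℝ) (σb2 : ℝ) (q : ℝ) : ℝ :=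
  (∫ z, (φ (Real.sqrt q * z)) ^ 2 ∂(gaussianReal 0 1)) /
    (∫ z, (φ' (Real.sqrt q * z)) ^ 2 ∂(gaussianReal 0 1)) + σb2

/-!
Write `W(q) = N(q) / D(q) + σ_b²` with `N(q) = E[φ(√q Z)²]` and `D(q) = E[φ'(√q Z)²]`.
For `q > 0` the law of `√q Z` has a density depending continuously on `q`, so dominated
convergence makes `N` and `D` continuous there even though `φ'` is only bounded and measurable;
at `q = 0` continuity comes from `φ²` and `φ'²` being continuous at the origin. Since
`φ(0) = 0`, continuity of `φ` gives the strict bound `N(q) < a²k²`, while `φ' = k` on `(-a, a)`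
gives `D(q) ≥ k² P(|√q Z| < a) = k² erf(a / √(2q))`. As `erf x ≥ 2x / (√π e)` on `[0, 1]`, the
resulting upper bound on `W` grows like `√q`, so `W(q) < q` for large `q`, while
`W(0) ≥ σ_b² > 0`; the intermediate value theorem produces the fixed point.
-/

open Real Set Filter Topology
open scoped NNReal

lemma intervalIntegrable_exp_neg_sq (u v : ℝ) :
    IntervalIntegrable (fun t => exp (-t ^ 2)) volume u v :=
  (continuous_exp.comp (continuous_pow 2).neg).intervalIntegrable u v

lemma erf_pos {x : ℝ} (hx : 0 < x) : 0 < erf x :=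
  mul_pos (by positivity) (intervalIntegral.intervalIntegral_pos_of_pos
    (intervalIntegrable_exp_neg_sq 0 x) (fun _ => exp_pos _) hx)

lemma mul_le_erf_of_le_one {x : ℝ} (hx₀ : 0 ≤ x) (hx₁ : x ≤ 1) :
    2 / (√π * exp 1) * x ≤ erf x := by
  have hint : x * exp (-1) ≤ ∫ t in (0:ℝ)..x, exp (-t ^ 2) := by
    simpa using intervalIntegral.integral_mono_on hx₀ intervalIntegrable_const
      (intervalIntegrable_exp_neg_sq 0 x) fun t ht => exp_le_exp.mpr (by nlinarith [ht.1, ht.2])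
  calc 2 / (√π * exp 1) * x = 2 / √π * (x * exp (-1)) := by rw [exp_neg]; field_simp
    _ ≤ erf x := mul_le_mul_of_nonneg_left hint (by positivity)

lemma exists_sq_div_erf_add_le {a : ℝ} (ha : 0 < a) (σ : ℝ) :
    ∃ q > 0, a ^ 2 / erf (a / √(2 * q)) + σ ≤ q := by
  -- With `q = s ^ 2`, `a ≤ s` keeps the argument of `erf` in `[0, 1]`, where `erf` is at
  -- least linear, so `a ^ 2 / erf (a / (√2 * s)) ≤ K * s`; and `s ≥ K + |σ| + 1` gives
  -- `K * s + σ ≤ s ^ 2`.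
  obtain ⟨K, hK, hKdef⟩ : ∃ K, 0 ≤ K ∧ K = a * √π * exp 1 := ⟨_, by positivity, rfl⟩
  obtain ⟨s, hs, hsdef⟩ : ∃ s, 1 ≤ s ∧ s = K + |σ| + a + 1 :=
    ⟨_, by linarith [abs_nonneg σ], rfl⟩
  have hx : a / √(2 * s ^ 2) = a / (√2 * s) := by
    rw [sqrt_mul zero_le_two, sqrt_sq (by linarith)]
  have hx₁ : a / (√2 * s) ≤ 1 :=
    (div_le_one (by positivity)).2 (by nlinarith [one_lt_sqrt_two, abs_nonneg σ])
  have hbound : a ^ 2 / erf (a / (√2 * s)) ≤ K * s :=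
    calc a ^ 2 / erf (a / (√2 * s))
        ≤ a ^ 2 / (2 / (√π * exp 1) * (a / (√2 * s))) :=
          div_le_div_of_nonneg_left (sq_nonneg a) (by positivity)
            (mul_le_erf_of_le_one (by positivity) hx₁)
      _ = K * s * (√2 / 2) := by rw [hKdef]; field_simp
      _ ≤ K * s :=
          mul_le_of_le_one_right (by positivity) (by linarith [sqrt_two_lt_three_halves])
  refine ⟨s ^ 2, by positivity, ?_⟩
  rw [hx]
  nlinarith [le_abs_self σ, mul_nonneg (sub_nonneg.2 hs) (abs_nonneg σ)]

lemma integral_exp_neg_sq_neg_self (y : ℝ) :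
    ∫ t in (-y)..y, exp (-t ^ 2) = 2 * ∫ t in (0:ℝ)..y, exp (-t ^ 2) := by
  have hsymm : ∫ t in (-y)..0, exp (-t ^ 2) = ∫ t in (0:ℝ)..y, exp (-t ^ 2) := by
    have := intervalIntegral.integral_comp_neg (a := 0) (b := y) fun t => exp (-t ^ 2)
    simp only [neg_zero, neg_sq] at this
    exact this.symm
  rw [← intervalIntegral.integral_add_adjacent_intervals (b := 0)
    (intervalIntegrable_exp_neg_sq _ _) (intervalIntegrable_exp_neg_sq _ _), hsymm, two_mul]

lemma gaussianReal_real_Ioo_neg_self {c : ℝ} (hc : 0 < c) :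
    (gaussianReal 0 1).real (Ioo (-c) c) = erf (c / √2) := by
  rw [measureReal_def, gaussianReal_apply_eq_integral 0 one_ne_zero, ENNReal.toReal_ofReal
    (setIntegral_nonneg measurableSet_Ioo fun x _ => gaussianPDFReal_nonneg 0 1 x),
    ← integral_Ioc_eq_integral_Ioo, ← intervalIntegral.integral_of_le (by linarith)]
  have h2 : √2 ≠ 0 := by positivity
  have hsub := intervalIntegral.integral_comp_mul_left (a := -(c / √2)) (b := c / √2)
    (gaussianPDFReal 0 1) h2
  rw [mul_neg, mul_div_cancel₀ _ h2] at hsub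
  have hpdf : ∀ t, gaussianPDFReal 0 1 (√2 * t) = (√(2 * π))⁻¹ * exp (-t ^ 2) := by
    intro t
    rw [gaussianPDFReal, sub_zero, mul_pow, sq_sqrt zero_le_two, NNReal.coe_one, mul_one]
    congr 2
    ring
  simp only [hpdf, intervalIntegral.integral_const_mul] at hsub
  rw [integral_exp_neg_sq_neg_self, smul_eq_mul, sqrt_mul zero_le_two] at hsub
  rw [erf]
  field_simp at hsub ⊢
  linarith

lemma isOpenPosMeasure_gaussianReal (m : ℝ) {v : ℝ≥0} (hv : v ≠ 0) :
    (gaussianReal m v).IsOpenPosMeasure :=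
  (gaussianReal_absolutelyContinuous' m hv).isOpenPosMeasure

lemma quasiMeasurePreserving_const_mul_gaussianReal (m : ℝ) {v : ℝ≥0} (hv : v ≠ 0) {c : ℝ}
    (hc : c ≠ 0) : Measure.QuasiMeasurePreserving (c * ·) (gaussianReal m v) volume :=
  .comp (μb := volume)
    ⟨measurable_const_mul c, by
      rw [Real.map_volume_mul_left hc]
      exact Measure.smul_absolutelyContinuous⟩
    ⟨measurable_id, by simpa using gaussianReal_absolutelyContinuous m hv⟩

lemma integrable_comp_const_mul_gaussianReal (m : ℝ) {v : ℝ≥0} (hv : v ≠ 0) {g : ℝ → ℝ}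
    {C : ℝ} (hg : AEStronglyMeasurable g volume) (hC : ∀ᵐ u, ‖g u‖ ≤ C) {c : ℝ} (hc : c ≠ 0) :
    Integrable (fun z => g (c * z)) (gaussianReal m v) :=
  have hqmp := quasiMeasurePreserving_const_mul_gaussianReal m hv hc
  .of_bound (hg.comp_quasiMeasurePreserving hqmp) C (hqmp.ae hC)

lemma gaussianReal_map_sqrt_mul {q : ℝ} (hq : 0 ≤ q) :
    (gaussianReal 0 1).map (√q * ·) = gaussianReal 0 q.toNNReal := by
  rw [gaussianReal_map_const_mul, mul_zero]
  congr 1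
  ext
  simp [sq_sqrt hq, hq]

lemma integral_comp_sqrt_mul_gaussianReal (g : ℝ → ℝ) {q : ℝ} (hq : 0 < q) :
    ∫ z, g (√q * z) ∂gaussianReal 0 1 = ∫ u, gaussianPDFReal 0 q.toNNReal u * g u := by
  rw [← (measurableEmbedding_mulLeft₀ (sqrt_pos.2 hq).ne').integral_map,
    gaussianReal_map_sqrt_mul hq.le,
    integral_gaussianReal_eq_integral_smul (by simpa using hq)]
  rfl

lemma continuousAt_gaussianPDFReal_toNNReal (m u : ℝ) {q : ℝ} (hq : 0 < q) :
    ContinuousAt (fun v : ℝ => gaussianPDFReal m v.toNNReal u) q := by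
  have hcont :
      ContinuousAt (fun v : ℝ => (√(2 * π * v))⁻¹ * exp (-(u - m) ^ 2 / (2 * v))) q := by
    have : 0 < 2 * π * q := by positivity
    fun_prop (disch := positivity)
  refine hcont.congr (eventually_of_mem (Ioi_mem_nhds hq) fun v hv => ?_)
  simp [gaussianPDFReal, Real.coe_toNNReal _ (le_of_lt hv)]

lemma gaussianPDFReal_toNNReal_le {q₀ q : ℝ} (hq : q ∈ Ioo (q₀ / 2) (2 * q₀)) (u : ℝ) :
    gaussianPDFReal 0 q.toNNReal u ≤ (√(π * q₀))⁻¹ * exp (-(4 * q₀)⁻¹ * u ^ 2) := by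
  obtain ⟨hlo, hhi⟩ := hq
  have hq₀ : 0 < q₀ := by linarith
  have hq : 0 < q := by linarith
  rw [gaussianPDFReal, coe_toNNReal _ hq.le, sub_zero]
  have hsqrt : (√(2 * π * q))⁻¹ ≤ (√(π * q₀))⁻¹ :=
    inv_anti₀ (by positivity) (sqrt_le_sqrt (by nlinarith [pi_pos]))
  have hexp : -u ^ 2 / (2 * q) ≤ -(4 * q₀)⁻¹ * u ^ 2 := by
    rw [neg_mul, neg_div, neg_le_neg_iff, inv_mul_eq_div]
    exact div_le_div_of_nonneg_left (sq_nonneg u) (by positivity) (by linarith)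
  exact mul_le_mul hsqrt (exp_le_exp.2 hexp) (exp_pos _).le (by positivity)

lemma continuousAt_integral_comp_sqrt_mul_gaussianReal {g : ℝ → ℝ} {C : ℝ}
    (hg : AEStronglyMeasurable g volume) (hC : ∀ᵐ u, ‖g u‖ ≤ C) {q₀ : ℝ} (hq₀ : 0 < q₀) :
    ContinuousAt (fun q => ∫ z, g (√q * z) ∂gaussianReal 0 1) q₀ := by
  have hnhds : Ioo (q₀ / 2) (2 * q₀) ∈ 𝓝 q₀ := Ioo_mem_nhds (by linarith) (by linarith)
  have hev : (fun q => ∫ z, g (√q * z) ∂gaussianReal 0 1)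
      =ᶠ[𝓝 q₀] fun q => ∫ u, gaussianPDFReal 0 q.toNNReal u * g u :=
    eventually_of_mem hnhds fun q hq =>
      integral_comp_sqrt_mul_gaussianReal g (by linarith [hq.1])
  rw [continuousAt_congr hev]
  refine continuousAt_of_dominated
    (bound := fun u => (√(π * q₀))⁻¹ * exp (-(4 * q₀)⁻¹ * u ^ 2) * C)
    (Eventually.of_forall fun q => (measurable_gaussianPDFReal _ _).aestronglyMeasurable.mul hg)
    (eventually_of_mem hnhds fun q hq => ?_)
    (((integrable_exp_neg_mul_sq (by positivity)).const_mul _).mul_const _)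
    (ae_of_all _ fun u =>
      (continuousAt_gaussianPDFReal_toNNReal 0 u hq₀).mul continuousAt_const)
  filter_upwards [hC] with u hu
  rw [norm_mul, Real.norm_of_nonneg (gaussianPDFReal_nonneg _ _ _)]
  exact mul_le_mul (gaussianPDFReal_toNNReal_le hq u) hu (norm_nonneg _) (by positivity)

lemma tendsto_integral_comp_sqrt_mul_gaussianReal_nhdsGT_zero {g : ℝ → ℝ} {C : ℝ}
    (hg : AEStronglyMeasurable g volume) (hC : ∀ᵐ u, ‖g u‖ ≤ C) (hg₀ : ContinuousAt g 0) :
    Tendsto (fun q => ∫ z, g (√q * z) ∂gaussianReal 0 1) (𝓝[>] 0) (𝓝 (g 0)) := by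
  have hqmp : ∀ q ∈ Ioi (0 : ℝ),
      Measure.QuasiMeasurePreserving (√q * ·) (gaussianReal 0 1) volume := fun q hq =>
    quasiMeasurePreserving_const_mul_gaussianReal 0 one_ne_zero (sqrt_pos.2 hq).ne'
  have hpt : ∀ z, Tendsto (fun q => g (√q * z)) (𝓝[>] 0) (𝓝 (g 0)) := fun z =>
    hg₀.tendsto.comp (((continuous_sqrt.mul continuous_const).tendsto' 0 0
      (by simp)).mono_left nhdsWithin_le_nhds)
  have hlim : Tendsto (fun q => ∫ z, g (√q * z) ∂gaussianReal 0 1) (𝓝[>] 0)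
      (𝓝 (∫ _, g 0 ∂gaussianReal 0 1)) :=
    tendsto_integral_filter_of_dominated_convergence (fun _ => C)
      (eventually_mem_nhdsWithin.mono fun q hq =>
        hg.comp_quasiMeasurePreserving (hqmp q hq))
      (eventually_mem_nhdsWithin.mono fun q hq => (hqmp q hq).ae hC) (integrable_const C)
      (ae_of_all _ hpt)
  simpa using hlim

lemma continuousOn_integral_comp_sqrt_mul_gaussianReal {g : ℝ → ℝ} {C : ℝ}
    (hg : AEStronglyMeasurable g volume) (hC : ∀ᵐ u, ‖g u‖ ≤ C) (hg₀ : ContinuousAt g 0) :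
    ContinuousOn (fun q => ∫ z, g (√q * z) ∂gaussianReal 0 1) (Ici 0) := by
  intro q hq
  rcases (mem_Ici.1 hq).eq_or_lt with rfl | hq
  · rw [← continuousWithinAt_Ioi_iff_Ici, ContinuousWithinAt]
    simpa using tendsto_integral_comp_sqrt_mul_gaussianReal_nhdsGT_zero hg hC hg₀
  · exact (continuousAt_integral_comp_sqrt_mul_gaussianReal hg hC hq).continuousWithinAt

lemma integral_lt_of_continuous {X : Type*} [TopologicalSpace X] [MeasurableSpace X]
    [OpensMeasurableSpace X] {μ : Measure X} [IsProbabilityMeasure μ] [μ.IsOpenPosMeasure]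
    {f : X → ℝ} {C : ℝ} (hf : Continuous f) (hfi : Integrable f μ) (hfC : ∀ x, f x ≤ C)
    {x₀ : X} (hx₀ : f x₀ < C) : ∫ x, f x ∂μ < C := by
  have hpos : 0 < ∫ x, (C - f x) ∂μ :=
    integral_pos_of_integrable_nonneg_nonzero (continuous_const.sub hf)
      ((integrable_const C).sub hfi) (fun x => sub_nonneg.2 (hfC x)) (sub_pos.2 hx₀).ne'
  rw [integral_sub (integrable_const C) hfi, integral_const, probReal_univ, one_smul] at hpos
  linarith

lemma exists_mem_Icc_eq_self_of_continuousOn {f : ℝ → ℝ} {a b : ℝ} (hab : a ≤ b)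
    (hf : ContinuousOn f (Icc a b)) (ha : a ≤ f a) (hb : f b ≤ b) :
    ∃ x ∈ Icc a b, f x = x := by
  obtain ⟨x, hx, hfx⟩ := intermediate_value_Icc' hab (hf.sub continuousOn_id)
    (show (0 : ℝ) ∈ Icc (f b - b) (f a - a) from ⟨by linarith, by linarith⟩)
  exact ⟨x, hx, sub_eq_zero.1 hfx⟩

lemma ae_norm_sq_le {μ : Measure ℝ} {f : ℝ → ℝ} {C : ℝ} (h : ∀ᵐ z ∂μ, |f z| ≤ C) :
    ∀ᵐ z ∂μ, ‖f z ^ 2‖ ≤ C ^ 2 :=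
  h.mono fun z hz => by
    rw [norm_pow, norm_eq_abs]
    exact pow_le_pow_left₀ (abs_nonneg _) hz 2

lemma le_Wmap (φ φ' : ℝ → ℝ) (σb2 q : ℝ) : σb2 ≤ Wmap φ φ' σb2 q :=
  le_add_of_nonneg_left <| div_nonneg (integral_nonneg fun _ => sq_nonneg _)
    (integral_nonneg fun _ => sq_nonneg _)

section ScaledBoundedActivation

variable {φ φ' : ℝ → ℝ} {a k B : ℝ}

lemma integral_sq_comp_mul_lt (hφ : Continuous φ) (hφB : ∀ z, |φ z| ≤ B) (hφ0 : |φ 0| < B)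
    (c : ℝ) : ∫ z, φ (c * z) ^ 2 ∂gaussianReal 0 1 < B ^ 2 := by
  have hsq : ∀ z, φ z ^ 2 ≤ B ^ 2 := fun z => sq_le_sq.2 ((hφB z).trans (le_abs_self B))
  have := isOpenPosMeasure_gaussianReal 0 one_ne_zero
  refine integral_lt_of_continuous (x₀ := 0) (by fun_prop)
    (.of_bound (by fun_prop) (B ^ 2) (ae_of_all _ fun z => ?_)) (fun z => hsq _) ?_
  · rw [norm_of_nonneg (sq_nonneg _)]
    exact hsq _
  · rw [mul_zero]
    exact sq_lt_sq' (by linarith [neg_abs_le (φ 0)]) (lt_of_le_of_lt (le_abs_self _) hφ0)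

lemma sq_mul_erf_le_integral_sq_comp_sqrt_mul (ha : 0 < a)
    (hφ' : AEStronglyMeasurable φ' volume) (hφ'_lin : ∀ z, |z| < a → φ' z = k)
    (hφ'_bdd : ∀ᵐ z ∂(volume : Measure ℝ), |φ' z| ≤ k) {q : ℝ} (hq : 0 < q) :
    k ^ 2 * erf (a / √(2 * q)) ≤ ∫ z, φ' (√q * z) ^ 2 ∂gaussianReal 0 1 := by
  have hsq : 0 < √q := sqrt_pos.2 hq
  have hconst : ∀ z ∈ Ioo (-(a / √q)) (a / √q), φ' (√q * z) ^ 2 = k ^ 2 := fun z hz => by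
    have hz' : |√q * z| < a := by
      rw [abs_mul, abs_of_pos hsq, ← lt_div_iff₀' hsq]
      exact abs_lt.2 hz
    rw [hφ'_lin _ hz']
  have hint := integrable_comp_const_mul_gaussianReal 0 one_ne_zero (hφ'.pow 2)
    (ae_norm_sq_le hφ'_bdd) hsq.ne'
  calc k ^ 2 * erf (a / √(2 * q))
      = ∫ z in Ioo (-(a / √q)) (a / √q), φ' (√q * z) ^ 2 ∂gaussianReal 0 1 := by
        rw [setIntegral_congr_fun measurableSet_Ioo hconst, setIntegral_const, smul_eq_mul,
          gaussianReal_real_Ioo_neg_self (by positivity), div_div,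
          ← sqrt_mul' _ zero_le_two, mul_comm q, mul_comm]
    _ ≤ ∫ z, φ' (√q * z) ^ 2 ∂gaussianReal 0 1 :=
        setIntegral_le_integral hint (ae_of_all _ fun _ => sq_nonneg _)

lemma integral_sq_comp_sqrt_mul_pos (ha : 0 < a) (hk : 0 < k)
    (hφ' : AEStronglyMeasurable φ' volume) (hφ'_lin : ∀ z, |z| < a → φ' z = k)
    (hφ'_bdd : ∀ᵐ z ∂(volume : Measure ℝ), |φ' z| ≤ k) {q : ℝ} (hq : 0 ≤ q) :
    0 < ∫ z, φ' (√q * z) ^ 2 ∂gaussianReal 0 1 := by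
  rcases hq.eq_or_lt with rfl | hq
  · simpa [hφ'_lin 0 (by simpa using ha)] using pow_pos hk 2
  · exact (mul_pos (pow_pos hk 2) (erf_pos (by positivity))).trans_le
      (sq_mul_erf_le_integral_sq_comp_sqrt_mul ha hφ' hφ'_lin hφ'_bdd hq)

lemma continuousOn_Wmap (hφ : Continuous φ) (hφB : ∀ z, |φ z| ≤ B)
    (hφ' : AEStronglyMeasurable φ' volume) (hφ'_bdd : ∀ᵐ z ∂(volume : Measure ℝ), |φ' z| ≤ k)
    (hφ'₀ : ContinuousAt φ' 0)
    (hD : ∀ q ∈ Ici (0 : ℝ), ∫ z, φ' (√q * z) ^ 2 ∂gaussianReal 0 1 ≠ 0) (σb2 : ℝ) :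
    ContinuousOn (Wmap φ φ' σb2) (Ici 0) :=
  ((continuousOn_integral_comp_sqrt_mul_gaussianReal (hφ.pow 2).aestronglyMeasurable
    (ae_norm_sq_le (ae_of_all _ hφB)) (hφ.pow 2).continuousAt).div
    (continuousOn_integral_comp_sqrt_mul_gaussianReal (hφ'.pow 2) (ae_norm_sq_le hφ'_bdd)
      (hφ'₀.pow 2)) hD).add continuousOn_const

lemma Wmap_lt_sq_div_erf_add (ha : 0 < a) (hk : 0 < k) (hφ : Continuous φ) (hφ₀ : φ 0 = 0)
    (hφB : ∀ z, |φ z| ≤ a * k) (hφ' : AEStronglyMeasurable φ' volume)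
    (hφ'_lin : ∀ z, |z| < a → φ' z = k) (hφ'_bdd : ∀ᵐ z ∂(volume : Measure ℝ), |φ' z| ≤ k)
    (σb2 : ℝ) {q : ℝ} (hq : 0 < q) :
    Wmap φ φ' σb2 q < a ^ 2 / erf (a / √(2 * q)) + σb2 := by
  have hE : 0 < erf (a / √(2 * q)) := erf_pos (by positivity)
  have hN := integral_sq_comp_mul_lt hφ hφB (by rw [hφ₀, abs_zero]; positivity) (√q)
  have hD := sq_mul_erf_le_integral_sq_comp_sqrt_mul ha hφ' hφ'_lin hφ'_bdd hq
  rw [Wmap, add_lt_add_iff_right,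
    div_lt_div_iff₀ ((mul_pos (by positivity) hE).trans_le hD) hE]
  calc (∫ z, φ (√q * z) ^ 2 ∂gaussianReal 0 1) * erf (a / √(2 * q))
      < (a * k) ^ 2 * erf (a / √(2 * q)) := mul_lt_mul_of_pos_right hN hE
    _ = a ^ 2 * (k ^ 2 * erf (a / √(2 * q))) := by ring
    _ ≤ a ^ 2 * ∫ z, φ' (√q * z) ^ 2 ∂gaussianReal 0 1 := by gcongr

end ScaledBoundedActivation

theorem W_continuous_bounded_fixed_point_general (φ φ' : ℝ → ℝ) (a k σb2 : ℝ)
    (ha : 0 < a) (hk : 0 < k) (hσb : 0 < σb2)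
    (hcont : Continuous φ)
    (hlin : ∀ z, |z| ≤ a → φ z = k * z)
    (hbdd : ∀ z, |φ z| ≤ a * k)
    (hmeas : Measurable φ')
    (hderiv_lin : ∀ z, |z| < a → φ' z = k)
    (hderiv_bdd : ∀ᵐ z ∂(volume : Measure ℝ), |φ' z| ≤ k) :
    ContinuousOn (Wmap φ φ' σb2) (Set.Ici 0) ∧
    (∀ q : ℝ, 0 ≤ q → σb2 ≤ Wmap φ φ' σb2 q) ∧
    (∀ q : ℝ, 0 < q →
      Wmap φ φ' σb2 q < a ^ 2 / erf (a / Real.sqrt (2 * q)) + σb2) ∧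
    ∃ qs : ℝ, 0 < qs ∧ Wmap φ φ' σb2 qs = qs := by
  have hφ₀ : φ 0 = 0 := by simpa using hlin 0 (by simpa using ha.le)
  have hφ'₀ : ContinuousAt φ' 0 :=
    continuousAt_const.congr <| mem_of_superset (Ioo_mem_nhds (neg_neg_of_pos ha) ha)
      fun z hz => (hderiv_lin z (abs_lt.2 hz)).symm
  have hcontW := continuousOn_Wmap hcont hbdd hmeas.aestronglyMeasurable hderiv_bdd hφ'₀
    (fun q hq => (integral_sq_comp_sqrt_mul_pos ha hk hmeas.aestronglyMeasurable hderiv_lin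
      hderiv_bdd hq).ne') σb2
  have hub := fun q (hq : 0 < q) => Wmap_lt_sq_div_erf_add ha hk hcont hφ₀ hbdd
    hmeas.aestronglyMeasurable hderiv_lin hderiv_bdd σb2 hq
  refine ⟨hcontW, fun q _ => le_Wmap φ φ' σb2 q, hub, ?_⟩
  obtain ⟨M, hM, hMle⟩ := exists_sq_div_erf_add_le ha σb2
  obtain ⟨qs, -, hfix⟩ := exists_mem_Icc_eq_self_of_continuousOn hM.le
    (hcontW.mono Icc_subset_Ici_self) (hσb.le.trans (le_Wmap φ φ' σb2 0))
    ((hub M hM).le.trans hMle)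
  exact ⟨qs, hfix ▸ hσb.trans_le (le_Wmap φ φ' σb2 qs), hfix⟩

theorem W_continuous_bounded_fixed_point (φ φ' : ℝ → ℝ) (a k σb2 : ℝ)
    (ha : 0 < a) (hk : 0 < k) (hσb : 0 < σb2)
    (hcont : Continuous φ)
    (hodd : ∀ z, φ (-z) = -φ z)
    (hlin : ∀ z, |z| ≤ a → φ z = k * z)
    (hbdd : ∀ z, |φ z| ≤ a * k)
    (hmeas : Measurable φ')
    (hderiv_lin : ∀ z, |z| < a → φ' z = k)
    (hderiv : ∀ᵐ z ∂(volume : Measure ℝ), HasDerivAt φ (φ' z) z)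
    (hderiv_bdd : ∀ᵐ z ∂(volume : Measure ℝ), |φ' z| ≤ k) :
    ContinuousOn (Wmap φ φ' σb2) (Set.Ici 0) ∧
    (∀ q : ℝ, 0 ≤ q → σb2 ≤ Wmap φ φ' σb2 q) ∧
    (∀ q : ℝ, 0 < q →
      Wmap φ φ' σb2 q < a ^ 2 / erf (a / Real.sqrt (2 * q)) + σb2) ∧
    ∃ qs : ℝ, 0 < qs ∧ Wmap φ φ' σb2 qs = qs :=
  W_continuous_bounded_fixed_point_general φ φ' a k σb2 ha hk hσb hcont hlin hbdd hmeas hderiv_lin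
    hderiv_bdd
end

section
/- Let q*, a, σ_b > 0 satisfy q* ≥ q*·erf(a/√(2q*)) − √(2/π)·a·√(q*)·exp(−a²/(2q*)) + σ_b². Then a/√(q*) < (8/π)^{1/6} · (a²/σ_b²)^{1/3}. -/
/-!
Put `x = a / √q*`. Dividing the hypothesis by `q*` gives
`σ_b² / q* ≤ (1 - erf (x / √2)) + √(2/π) x e^{-x²/2}`. The Mills-ratio bound gives
`1 - erf (x / √2) ≤ √(2/π) / x`, and `2y < e^y` gives `x e^{-x²/2} < 1 / x`, so the right side is
below `√(8/π) / x`. As `σ_b² / q* = σ_b² x² / a²`, this says `x³ < √(8/π) a² / σ_b²`; take cube roots.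
-/

open MeasureTheory Set Filter Topology Real

lemma integrable_exp_neg_sq : Integrable fun t : ℝ => exp (-t ^ 2) := by
  simpa using integrable_exp_neg_mul_sq one_pos

lemma integrable_mul_exp_neg_sq : Integrable fun t : ℝ => t * exp (-t ^ 2) := by
  simpa using integrable_mul_exp_neg_mul_sq one_pos

lemma one_sub_erf_eq (u : ℝ) : 1 - erf u = 2 / √π * ∫ t in Ioi u, exp (-t ^ 2) := by
  have hhalf : ∫ t in Ioi (0 : ℝ), exp (-t ^ 2) = √π / 2 := by
    simpa using integral_gaussian_Ioi 1
  rw [erf, ← intervalIntegral.integral_Ioi_sub_Ioi' integrable_exp_neg_sq.integrableOn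
    integrable_exp_neg_sq.integrableOn, hhalf]
  field_simp
  ring

lemma integral_Ioi_mul_exp_neg_sq (u : ℝ) :
    ∫ t in Ioi u, t * exp (-t ^ 2) = exp (-u ^ 2) / 2 := by
  have hderiv (t : ℝ) : HasDerivAt (fun t => -exp (-t ^ 2) / 2) (t * exp (-t ^ 2)) t := by
    refine (((hasDerivAt_pow 2 t).fun_neg.exp).fun_neg.div_const 2).congr_deriv ?_
    norm_num
    ring
  have hlim : Tendsto (fun t : ℝ => -exp (-t ^ 2) / 2) atTop (𝓝 0) := by
    have h := (tendsto_exp_atBot.comp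
      (tendsto_neg_atTop_atBot.comp (tendsto_pow_atTop two_ne_zero))).neg.div_const 2
    simpa using h
  rw [integral_Ioi_of_hasDerivAt_of_tendsto' (fun t _ => hderiv t)
    integrable_mul_exp_neg_sq.integrableOn hlim]
  ring

/-- The Mills-ratio bound: on `Ioi u` the Gaussian is dominated by `t / u` times itself. -/
lemma integral_Ioi_exp_neg_sq_le {u : ℝ} (hu : 0 < u) :
    ∫ t in Ioi u, exp (-t ^ 2) ≤ exp (-u ^ 2) / (2 * u) :=
  calc ∫ t in Ioi u, exp (-t ^ 2)
      ≤ ∫ t in Ioi u, u⁻¹ * (t * exp (-t ^ 2)) := by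
        refine setIntegral_mono_on integrable_exp_neg_sq.integrableOn
          (integrable_mul_exp_neg_sq.integrableOn.const_mul _) measurableSet_Ioi fun t ht => ?_
        rw [← mul_assoc, inv_mul_eq_div]
        exact le_mul_of_one_le_left (exp_pos _).le ((one_le_div hu).2 (le_of_lt ht))
    _ = exp (-u ^ 2) / (2 * u) := by
        rw [integral_const_mul, integral_Ioi_mul_exp_neg_sq]
        field_simp

lemma one_sub_erf_le {u : ℝ} (hu : 0 < u) : 1 - erf u ≤ exp (-u ^ 2) / (√π * u) := by
  calc 1 - erf u ≤ 2 / √π * (exp (-u ^ 2) / (2 * u)) := by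
        rw [one_sub_erf_eq]
        exact mul_le_mul_of_nonneg_left (integral_Ioi_exp_neg_sq_le hu) (by positivity)
    _ = exp (-u ^ 2) / (√π * u) := by
        field_simp

lemma one_sub_erf_div_sqrt_two_le {x : ℝ} (hx : 0 < x) : 1 - erf (x / √2) ≤ √(2 / π) / x := by
  calc 1 - erf (x / √2) ≤ exp (-(x / √2) ^ 2) / (√π * (x / √2)) :=
        one_sub_erf_le (by positivity)
    _ ≤ 1 / (√π * (x / √2)) := by
        gcongr
        exact exp_le_one_iff.2 (neg_nonpos.2 (sq_nonneg _))
    _ = √(2 / π) / x := by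
        rw [sqrt_div' _ pi_pos.le]
        field_simp

lemma two_mul_lt_exp (y : ℝ) : 2 * y < exp y := by
  rcases le_or_gt y 0 with hy | hy
  · linarith [exp_pos y]
  · nlinarith [quadratic_le_exp_of_nonneg hy.le]

lemma mul_exp_neg_sq_div_two_lt {x : ℝ} (hx : 0 < x) : x * exp (-x ^ 2 / 2) < 1 / x := by
  rw [lt_div_iff₀ hx, neg_div, exp_neg, ← mul_rotate, mul_inv_lt_iff₀ (exp_pos _)]
  linarith [two_mul_lt_exp (x ^ 2 / 2)]

lemma one_sub_erf_add_lt {x : ℝ} (hx : 0 < x) :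
    1 - erf (x / √2) + √(2 / π) * x * exp (-x ^ 2 / 2) < √(8 / π) / x := by
  have hsqrt : √(8 / π) = 2 * √(2 / π) := by
    rw [show (8 : ℝ) / π = 2 ^ 2 * (2 / π) by ring, sqrt_mul (by norm_num), sqrt_sq two_pos.le]
  calc 1 - erf (x / √2) + √(2 / π) * x * exp (-x ^ 2 / 2)
      = 1 - erf (x / √2) + √(2 / π) * (x * exp (-x ^ 2 / 2)) := by ring
    _ < √(2 / π) / x + √(2 / π) * (1 / x) :=
        add_lt_add_of_le_of_lt (one_sub_erf_div_sqrt_two_le hx)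
          (mul_lt_mul_of_pos_left (mul_exp_neg_sq_div_two_lt hx) (sqrt_pos.2 (by positivity)))
    _ = √(8 / π) / x := by rw [hsqrt]; ring

lemma lt_rpow_of_pow_three_lt_sqrt_mul {x c d : ℝ} (hx : 0 ≤ x) (hc : 0 ≤ c) (hd : 0 ≤ d)
    (h : x ^ 3 < √c * d) : x < c ^ (1 / 6 : ℝ) * d ^ (1 / 3 : ℝ) := by
  have hroot : (√c * d) ^ (3 : ℝ)⁻¹ = c ^ (1 / 6 : ℝ) * d ^ (1 / 3 : ℝ) := by
    rw [mul_rpow (sqrt_nonneg c) hd, sqrt_eq_rpow, ← rpow_mul hc]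
    norm_num
  rw [← hroot, lt_rpow_inv_iff_of_pos hx (by positivity) three_pos]
  exact_mod_cast h

theorem ratio_upper_bound (qs a σb : ℝ)
    (hq : 0 < qs) (ha : 0 < a) (hσb : 0 < σb)
    (hineq : qs ≥ qs * erf (a / Real.sqrt (2 * qs)) -
        Real.sqrt (2 / Real.pi) * a * Real.sqrt qs * Real.exp (-a ^ 2 / (2 * qs)) +
        σb ^ 2) :
    a / Real.sqrt qs < (8 / Real.pi) ^ ((1:ℝ)/6) * (a ^ 2 / σb ^ 2) ^ ((1:ℝ)/3) := by
  set x := a / √qs with hx_def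
  have hx : 0 < x := by positivity
  have hs : 0 < √qs := sqrt_pos.2 hq
  have hxsq : x ^ 2 = a ^ 2 / qs := by rw [div_pow, sq_sqrt hq.le]
  have hqx : qs * x ^ 2 = a ^ 2 := by rw [hxsq, mul_div_cancel₀ _ hq.ne']
  have hu : a / √(2 * qs) = x / √2 := by rw [sqrt_mul zero_le_two, div_div, mul_comm]
  have hmul : a * √qs = qs * x := by
    rw [hx_def, mul_div_assoc', eq_div_iff hs.ne', mul_assoc, mul_self_sqrt hq.le, mul_comm]
  have hy : -a ^ 2 / (2 * qs) = -x ^ 2 / 2 := by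
    rw [hxsq]
    field_simp
  rw [hu, mul_assoc _ a, hmul, hy] at hineq
  have hσ : σb ^ 2 / qs < √(8 / π) / x := by
    refine lt_of_le_of_lt ((div_le_iff₀ hq).2 ?_) (one_sub_erf_add_lt hx)
    linarith
  have hcube : x ^ 3 < √(8 / π) * (a ^ 2 / σb ^ 2) := by
    rw [lt_div_iff₀ hx, div_mul_eq_mul_div, div_lt_iff₀ hq] at hσ
    rw [mul_div_assoc', lt_div_iff₀ (by positivity)]
    calc x ^ 3 * σb ^ 2 = x ^ 2 * (σb ^ 2 * x) := by ring
      _ < x ^ 2 * (√(8 / π) * qs) := mul_lt_mul_of_pos_left hσ (by positivity)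
      _ = √(8 / π) * a ^ 2 := by rw [← hqx]; ring
  exact lt_rpow_of_pow_three_lt_sqrt_mul hx.le (by positivity) (by positivity) hcube
end
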